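/- Let G be the group with presentation ⟨x, y, z | x^{2^n} = 1, y^{2^m} = 1, z^{2^ℓ} = 1, [y,x] = z, [z,x] = z^{-2}, [z,y] = z^{-2}⟩ with n ≥ m ≥ 1 and ℓ ≥ 2. Then the center of G is the subgroup generated by x², y² and z^{2^{ℓ-1}}, and Z(G) ≅ C_{2^{n-1}} × C_{2^{m-1}} × C_2. -/

import Mathlib

/-!
Every element of `G1 n m ℓ` is a normal form `x ^ a * y ^ b * z ^ c`, and the relations give an
explicit rule for multiplying normal forms (`G1.normalForm_mul`): moving `z` past `x` or `y`
inverts it, and moving `y ^ b` past `x ^ a` costs `z ^ ((b % 2) * (a % 2))`. Taking this rule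
as the definition of a group structure on `ZMod 2^n × ZMod 2^m × ZMod 2^ℓ` gives a model of the
presentation, and the normal form map is inverse to the induced map `G1 n m ℓ → Model`.
In the model, commuting with `x` and `z` forces `a` and `b` to be even and `2 * c = 0`, and such
elements are central and multiply coordinatewise; halving `a` and `b` and writing
`c = 2^(ℓ-1) * w` identifies the centre with `C_{2^(n-1)} × C_{2^(m-1)} × C_2`, generated by
`x ^ 2`, `y ^ 2` and `z ^ 2^(ℓ-1)`.
-/

open FreeGroup in
/-- Relators of G_⚀ = ⟨x,y,z | x^{2^n}=1, y^{2^m}=1, z^{2^ℓ}=1, [y,x]=z, [z,x]=z⁻²,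
[z,y]=z⁻²⟩, with the convention [y,x] = y⁻¹x⁻¹yx. Generators 0 ↦ x, 1 ↦ y, 2 ↦ z. -/
def relsG1 (n m ℓ : ℕ) : Set (FreeGroup (Fin 3)) :=
  { (of 0) ^ (2 ^ n), (of 1) ^ (2 ^ m), (of 2) ^ (2 ^ ℓ),
    (of 1)⁻¹ * (of 0)⁻¹ * of 1 * of 0 * (of 2)⁻¹,
    (of 2)⁻¹ * (of 0)⁻¹ * of 2 * of 0 * (of 2) ^ 2,
    (of 2)⁻¹ * (of 1)⁻¹ * of 2 * of 1 * (of 2) ^ 2 }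

/-- The group G_⚀(n,m,ℓ). -/
abbrev G1 (n m ℓ : ℕ) := PresentedGroup (relsG1 n m ℓ)

namespace ZMod

variable {n k : ℕ}

def scale (d : ℕ) (h : n = d * k) : ZMod k →+ ZMod n :=
  ZMod.lift k ⟨d • Int.castAddHom (ZMod n), by simp [← Nat.cast_mul, ← h]⟩

@[simp]
theorem scale_intCast (d : ℕ) (h : n = d * k) (z : ℤ) : scale d h z = d * z := by
  simp [scale, ZMod.lift_coe]

@[simp]
theorem scale_one (d : ℕ) (h : n = d * k) : scale d h 1 = d := by
  simpa using scale_intCast d h 1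

theorem scale_injective {d : ℕ} (hd : d ≠ 0) (h : n = d * k) :
    Function.Injective (scale d h) := by
  refine (injective_iff_map_eq_zero _).2 fun u hu => ?_
  obtain ⟨w, rfl⟩ := intCast_surjective u
  rw [scale_intCast, ← Int.cast_natCast, ← Int.cast_mul, intCast_zmod_eq_zero_iff_dvd, h,
    Nat.cast_mul, mul_dvd_mul_iff_left (by exact_mod_cast hd)] at hu
  rwa [intCast_zmod_eq_zero_iff_dvd]

theorem castHom_eq_zero_iff_exists_scale {d : ℕ} (h : n = d * k) (a : ZMod n) :
    castHom (h ▸ dvd_mul_right d k) (ZMod d) a = 0 ↔ ∃ u, scale d h u = a := by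
  constructor
  · intro ha
    obtain ⟨w, rfl⟩ := intCast_surjective a
    rw [map_intCast, intCast_zmod_eq_zero_iff_dvd] at ha
    obtain ⟨v, rfl⟩ := ha
    exact ⟨v, by simp⟩
  · rintro ⟨u, rfl⟩
    obtain ⟨v, rfl⟩ := intCast_surjective u
    rw [scale_intCast, map_mul, map_natCast, natCast_self, zero_mul]

theorem natCast_mul_scale {d : ℕ} (h : n = d * k) (u : ZMod k) :
    (k : ZMod n) * scale d h u = 0 := by
  obtain ⟨v, rfl⟩ := intCast_surjective u
  rw [scale_intCast, ← mul_assoc, ← Nat.cast_mul, Nat.mul_comm k d, ← h, natCast_self, zero_mul]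

theorem natCast_mul_eq_zero_iff_exists_scale {d : ℕ} (h : n = d * k) (hk : k ≠ 0)
    (c : ZMod n) : (k : ZMod n) * c = 0 ↔ ∃ u, scale d h u = c := by
  constructor
  · intro hc
    obtain ⟨w, rfl⟩ := intCast_surjective c
    rw [← Int.cast_natCast, ← Int.cast_mul, intCast_zmod_eq_zero_iff_dvd, h, Nat.cast_mul,
      mul_comm (d : ℤ), mul_dvd_mul_iff_left (by exact_mod_cast hk)] at hc
    obtain ⟨v, rfl⟩ := hc
    exact ⟨v, by simp⟩
  · rintro ⟨u, rfl⟩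
    exact natCast_mul_scale h u

end ZMod

section

variable {H : Type*} [Group H]

theorem pow_eq_pow_of_natCast_eq {N : ℕ} {x : H} (hx : x ^ N = 1) {u v : ℕ}
    (h : (u : ZMod N) = v) : x ^ u = x ^ v :=
  pow_eq_pow_iff_modEq.2 <|
    ((ZMod.natCast_eq_natCast_iff _ _ _).1 h).of_dvd (orderOf_dvd_of_pow_eq_one hx)

theorem zpow_eq_zpow_of_intCast_eq {L : ℕ} {z : H} (hz : z ^ L = 1) {u v : ℤ}
    (h : (u : ZMod L) = v) : z ^ u = z ^ v :=
  zpow_eq_zpow_iff_modEq.2 <| ((ZMod.intCast_eq_intCast_iff _ _ _).1 h).of_dvd <|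
    Int.natCast_dvd_natCast.2 (orderOf_dvd_of_pow_eq_one hz)

theorem Subgroup.map_equiv_center {K : Type*} [Group K] (e : H ≃* K) :
    (center H).map e.toMonoidHom = center K := by
  ext g
  rw [mem_map_equiv, mem_center_iff, mem_center_iff, e.symm.surjective.forall]
  simp only [← map_mul, e.symm.injective.eq_iff]

end

namespace G1

section NormalForm

variable {H : Type*} [Group H] {x y z : H}

theorem zpow_mul_of_mul_eq_mul_inv (hzx : z * x = x * z⁻¹) (c : ℤ) :
    z ^ c * x = x * z ^ (-c) := by
  have hconj : SemiconjBy x⁻¹ z z⁻¹ :=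
    calc x⁻¹ * z = x⁻¹ * (z * x) * x⁻¹ := by group
      _ = z⁻¹ * x⁻¹ := by rw [hzx]; group
  calc z ^ c * x = x * (x⁻¹ * z ^ c) * x := by group
    _ = x * (z⁻¹ ^ c * x⁻¹) * x := by rw [(hconj.zpow_right c).eq]
    _ = x * z ^ (-c) := by group

theorem zpow_mul_pow_of_mul_eq_mul_inv (hzx : z * x = x * z⁻¹) (c : ℤ) (a : ℕ) :
    z ^ c * x ^ a = x ^ a * z ^ ((-1) ^ a * c) := by
  induction a generalizing c with
  | zero => simp
  | succ a ih =>
    rw [pow_succ, ← mul_assoc, ih, mul_assoc, zpow_mul_of_mul_eq_mul_inv hzx, ← mul_assoc,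
      ← pow_succ, pow_succ (-1 : ℤ)]
    ring_nf

theorem pow_mul_of_mul_eq (hyx : y * x = x * y * z) (hzy : z * y = y * z⁻¹) (b : ℕ) :
    y ^ b * x = x * y ^ b * z ^ ((b % 2 : ℕ) : ℤ) := by
  induction b with
  | zero => simp
  | succ b ih =>
    have hz : z * y ^ b = y ^ b * z ^ ((-1) ^ b : ℤ) := by
      simpa using zpow_mul_pow_of_mul_eq_mul_inv hzy 1 b
    have hexp : (-1) ^ b + ((b % 2 : ℕ) : ℤ) = (((b + 1) % 2 : ℕ) : ℤ) := by
      rw [neg_one_pow_eq_pow_mod_two]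
      rcases Nat.mod_two_eq_zero_or_one b with hb | hb <;> simp [Nat.add_mod, hb]
    calc y ^ (b + 1) * x = y * (y ^ b * x) := by rw [pow_succ', mul_assoc]
      _ = y * x * (y ^ b * z ^ ((b % 2 : ℕ) : ℤ)) := by rw [ih]; group
      _ = x * y * (z * y ^ b) * z ^ ((b % 2 : ℕ) : ℤ) := by rw [hyx]; group
      _ = x * y ^ (b + 1) * z ^ (((b + 1) % 2 : ℕ) : ℤ) := by
        rw [hz, ← hexp, zpow_add, pow_succ']; group

theorem pow_mul_pow_of_mul_eq (hyx : y * x = x * y * z) (hzx : z * x = x * z⁻¹)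
    (hzy : z * y = y * z⁻¹) (a b : ℕ) :
    y ^ b * x ^ a = x ^ a * y ^ b * z ^ ((b % 2 * (a % 2) : ℕ) : ℤ) := by
  induction a with
  | zero => simp
  | succ a ih =>
    have hexp : ((b % 2 : ℕ) : ℤ) - ((b % 2 * (a % 2) : ℕ) : ℤ) =
        ((b % 2 * ((a + 1) % 2) : ℕ) : ℤ) := by
      rcases Nat.mod_two_eq_zero_or_one a with ha | ha <;> simp [Nat.add_mod, ha]
    calc y ^ b * x ^ (a + 1) = y ^ b * x ^ a * x := by rw [pow_succ, mul_assoc]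
      _ = x ^ a * y ^ b * (z ^ ((b % 2 * (a % 2) : ℕ) : ℤ) * x) := by rw [ih]; group
      _ = x ^ a * (y ^ b * x) * z ^ (-((b % 2 * (a % 2) : ℕ) : ℤ)) := by
        rw [zpow_mul_of_mul_eq_mul_inv hzx]; group
      _ = x ^ (a + 1) * y ^ b * z ^ ((b % 2 * ((a + 1) % 2) : ℕ) : ℤ) := by
        rw [pow_mul_of_mul_eq hyx hzy, ← hexp, sub_eq_add_neg, zpow_add, pow_succ]; group

theorem normalForm_mul (hyx : y * x = x * y * z) (hzx : z * x = x * z⁻¹)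
    (hzy : z * y = y * z⁻¹) (a b : ℕ) (c : ℤ) (a' b' : ℕ) (c' : ℤ) :
    x ^ a * y ^ b * z ^ c * (x ^ a' * y ^ b' * z ^ c') =
      x ^ (a + a') * y ^ (b + b') *
        z ^ (c' + (-1) ^ b' * ((-1) ^ a' * c + ((b % 2 * (a' % 2) : ℕ) : ℤ))) := by
  calc x ^ a * y ^ b * z ^ c * (x ^ a' * y ^ b' * z ^ c')
      = x ^ a * y ^ b * (z ^ c * x ^ a') * y ^ b' * z ^ c' := by group
    _ = x ^ a * (y ^ b * x ^ a') * z ^ ((-1) ^ a' * c) * y ^ b' * z ^ c' := by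
      rw [zpow_mul_pow_of_mul_eq_mul_inv hzx]; group
    _ = x ^ (a + a') * y ^ b * (z ^ (((b % 2 * (a' % 2) : ℕ) : ℤ) + (-1) ^ a' * c) * y ^ b') *
          z ^ c' := by
      rw [pow_mul_pow_of_mul_eq hyx hzx hzy, zpow_add, pow_add]; group
    _ = _ := by
      rw [zpow_mul_pow_of_mul_eq_mul_inv hzy]; simp only [pow_add]; group

end NormalForm

section Relations

variable {H : Type*} [Group H]

structure Relations (N M L : ℕ) (x y z : H) : Prop where
  pow_x : x ^ N = 1
  pow_y : y ^ M = 1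
  pow_z : z ^ L = 1
  y_mul_x : y * x = x * y * z
  z_mul_x : z * x = x * z⁻¹
  z_mul_y : z * y = y * z⁻¹

theorem commutator_relator_eq_one_iff (x y z : H) :
    y⁻¹ * x⁻¹ * y * x * z⁻¹ = 1 ↔ y * x = x * y * z := by
  rw [show y⁻¹ * x⁻¹ * y * x * z⁻¹ = (x * y)⁻¹ * (y * x) * z⁻¹ by group, mul_inv_eq_one,
    inv_mul_eq_iff_eq_mul]

theorem inversion_relator_eq_one_iff (x z : H) :
    z⁻¹ * x⁻¹ * z * x * z ^ 2 = 1 ↔ z * x = x * z⁻¹ := by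
  rw [show z⁻¹ * x⁻¹ * z * x * z ^ 2 =
      z ^ (-2 : ℤ) * ((x * z⁻¹)⁻¹ * (z * x)) * (z ^ (-2 : ℤ))⁻¹ by group,
    conj_eq_one_iff, inv_mul_eq_one, eq_comm]

theorem lift_relsG1_eq_one_iff (n m ℓ : ℕ) (f : Fin 3 → H) :
    (∀ r ∈ relsG1 n m ℓ, FreeGroup.lift f r = 1) ↔
      Relations (2 ^ n) (2 ^ m) (2 ^ ℓ) (f 0) (f 1) (f 2) := by
  simp only [relsG1, Set.mem_insert_iff, Set.mem_singleton_iff, forall_eq_or_imp, forall_eq,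
    map_mul, map_inv, map_pow, FreeGroup.lift_apply_of, commutator_relator_eq_one_iff,
    inversion_relator_eq_one_iff]
  constructor <;> rintro ⟨h₁, h₂, h₃, h₄, h₅, h₆⟩ <;> exact ⟨h₁, h₂, h₃, h₄, h₅, h₆⟩

theorem relations_of (n m ℓ : ℕ) :
    Relations (2 ^ n) (2 ^ m) (2 ^ ℓ) (PresentedGroup.of 0 : G1 n m ℓ) (PresentedGroup.of 1)
      (PresentedGroup.of 2) := by
  refine (lift_relsG1_eq_one_iff n m ℓ PresentedGroup.of).1 fun r hr => ?_
  rw [show FreeGroup.lift PresentedGroup.of = PresentedGroup.mk (relsG1 n m ℓ) from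
    FreeGroup.ext_hom _ _ fun _ => by simp [PresentedGroup.of]]
  exact PresentedGroup.one_of_mem hr

end Relations

section Parity

-- Evenness of `N` is what makes `(-1) ^ a` and `a % 2` well defined for `a : ZMod N`.
def parity (N : ℕ) [Fact (2 ∣ N)] : ZMod N →+* ZMod 2 := ZMod.castHom Fact.out _

variable {N : ℕ} [Fact (2 ∣ N)]

def sgn (a : ZMod N) : ℤ := (-1) ^ (parity N a).val

def bit (a : ZMod N) : ℤ := (parity N a).val

@[simp] theorem sgn_zero : sgn (0 : ZMod N) = 1 := by simp [sgn]
@[simp] theorem bit_zero : bit (0 : ZMod N) = 0 := by simp [bit]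
@[simp] theorem sgn_one : sgn (1 : ZMod N) = -1 := by rw [sgn, map_one]; rfl
@[simp] theorem bit_one : bit (1 : ZMod N) = 1 := by rw [bit, map_one]; rfl

theorem sgn_add (a b : ZMod N) : sgn (a + b) = sgn a * sgn b := by
  simp only [sgn, map_add]
  generalize parity N a = p, parity N b = q
  revert p q; decide

theorem bit_add (a b : ZMod N) : bit (a + b) = bit a + bit b - 2 * bit a * bit b := by
  simp only [bit, map_add]
  generalize parity N a = p, parity N b = q
  revert p q; decide

@[simp] theorem bit_neg (a : ZMod N) : bit (-a) = bit a := by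
  rw [bit, bit, map_neg, ZMod.neg_eq_self_mod_two]

@[simp] theorem sgn_of_parity_eq_zero {a : ZMod N} (h : parity N a = 0) : sgn a = 1 := by
  simp [sgn, h]

@[simp] theorem bit_of_parity_eq_zero {a : ZMod N} (h : parity N a = 0) : bit a = 0 := by
  simp [bit, h]

theorem parity_cases (a : ZMod N) :
    parity N a = 0 ∧ sgn a = 1 ∧ bit a = 0 ∨ parity N a = 1 ∧ sgn a = -1 ∧ bit a = 1 := by
  unfold sgn bit
  generalize parity N a = p
  revert p; decide

theorem sgn_eq_one_sub_two_mul_bit (a : ZMod N) : sgn a = 1 - 2 * bit a := by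
  simp only [sgn, bit]
  generalize parity N a = p
  revert p; decide

theorem parity_scale_two {N' : ℕ} (hN : N = 2 * N') (u : ZMod N') :
    parity N (ZMod.scale 2 hN u) = 0 :=
  (ZMod.castHom_eq_zero_iff_exists_scale hN _).2 ⟨u, rfl⟩

theorem parity_val [NeZero N] (a : ZMod N) : (parity N a).val = a.val % 2 := by
  rw [parity, ZMod.castHom_apply, ZMod.cast_eq_val, ZMod.val_natCast]

theorem sgn_eq_neg_one_pow_val [NeZero N] (a : ZMod N) : sgn a = (-1) ^ a.val := by
  rw [sgn, parity_val, ← neg_one_pow_eq_pow_mod_two]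

theorem bit_eq_val_mod_two [NeZero N] (a : ZMod N) : bit a = (a.val % 2 : ℕ) := by
  rw [bit, parity_val]

end Parity

/-- `⟨a, b, c⟩` stands for `x ^ a * y ^ b * z ^ c`; the multiplication below is the rule of
`normalForm_mul`, with `sgn` and `bit` standing for `(-1) ^ t` and `t % 2`. -/
@[ext]
structure Model (N M L : ℕ) where
  a : ZMod N
  b : ZMod M
  c : ZMod L

namespace Model

variable {N M L : ℕ}

instance : One (Model N M L) := ⟨⟨0, 0, 0⟩⟩

@[simp] theorem one_a : (1 : Model N M L).a = 0 := rfl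
@[simp] theorem one_b : (1 : Model N M L).b = 0 := rfl
@[simp] theorem one_c : (1 : Model N M L).c = 0 := rfl

variable [Fact (2 ∣ N)] [Fact (2 ∣ M)]

instance : Mul (Model N M L) :=
  ⟨fun p q => ⟨p.a + q.a, p.b + q.b, q.c + sgn q.b * (sgn q.a * p.c + bit p.b * bit q.a)⟩⟩

instance : Inv (Model N M L) :=
  ⟨fun p => ⟨-p.a, -p.b, -(sgn p.b * (sgn p.a * p.c + bit p.a * bit p.b))⟩⟩

@[simp] theorem mul_a (p q : Model N M L) : (p * q).a = p.a + q.a := rfl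
@[simp] theorem mul_b (p q : Model N M L) : (p * q).b = p.b + q.b := rfl
@[simp] theorem mul_c (p q : Model N M L) :
    (p * q).c = q.c + sgn q.b * (sgn q.a * p.c + bit p.b * bit q.a) := rfl
@[simp] theorem inv_a (p : Model N M L) : p⁻¹.a = -p.a := rfl
@[simp] theorem inv_b (p : Model N M L) : p⁻¹.b = -p.b := rfl
@[simp] theorem inv_c (p : Model N M L) :
    p⁻¹.c = -(sgn p.b * (sgn p.a * p.c + bit p.a * bit p.b)) := rfl

instance : Group (Model N M L) := Group.ofLeftAxioms
  (fun p q r => by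
    ext
    · exact add_assoc _ _ _
    · exact add_assoc _ _ _
    · simp only [mul_a, mul_b, mul_c, sgn_add, bit_add]
      simp only [sgn_eq_one_sub_two_mul_bit]
      push_cast
      ring)
  (fun p => by ext <;> simp)
  (fun p => by
    ext
    · simp
    · simp
    · simp only [mul_c, inv_b, inv_c, bit_neg, one_c]
      rcases parity_cases p.a with ⟨-, ha, ha'⟩ | ⟨-, ha, ha'⟩ <;>
        rcases parity_cases p.b with ⟨-, hb, hb'⟩ | ⟨-, hb, hb'⟩ <;>
        simp only [ha, ha', hb, hb'] <;> push_cast <;> ring)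

open Multiplicative

def ofA : Multiplicative (ZMod N) →* Model N M L where
  toFun a := ⟨a.toAdd, 0, 0⟩
  map_one' := rfl
  map_mul' _ _ := by ext <;> simp

def ofB : Multiplicative (ZMod M) →* Model N M L where
  toFun b := ⟨0, b.toAdd, 0⟩
  map_one' := rfl
  map_mul' _ _ := by ext <;> simp

def ofC : Multiplicative (ZMod L) →* Model N M L where
  toFun c := ⟨0, 0, c.toAdd⟩
  map_one' := rfl
  map_mul' _ _ := by ext <;> simp [add_comm]

def x : Model N M L := ⟨1, 0, 0⟩
def y : Model N M L := ⟨0, 1, 0⟩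
def z : Model N M L := ⟨0, 0, 1⟩

theorem x_zpow (k : ℤ) : (x : Model N M L) ^ k = ⟨k, 0, 0⟩ := by
  rw [show x = ofA (ofAdd 1) from rfl, ← map_zpow, ← ofAdd_zsmul, Int.smul_one_eq_cast]; rfl

theorem y_zpow (k : ℤ) : (y : Model N M L) ^ k = ⟨0, k, 0⟩ := by
  rw [show y = ofB (ofAdd 1) from rfl, ← map_zpow, ← ofAdd_zsmul, Int.smul_one_eq_cast]; rfl

theorem z_zpow (k : ℤ) : (z : Model N M L) ^ k = ⟨0, 0, k⟩ := by
  rw [show z = ofC (ofAdd 1) from rfl, ← map_zpow, ← ofAdd_zsmul, Int.smul_one_eq_cast]; rfl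

theorem x_pow (k : ℕ) : (x : Model N M L) ^ k = ⟨k, 0, 0⟩ := by
  rw [← zpow_natCast, x_zpow, Int.cast_natCast]

theorem y_pow (k : ℕ) : (y : Model N M L) ^ k = ⟨0, k, 0⟩ := by
  rw [← zpow_natCast, y_zpow, Int.cast_natCast]

theorem z_pow (k : ℕ) : (z : Model N M L) ^ k = ⟨0, 0, k⟩ := by
  rw [← zpow_natCast, z_zpow, Int.cast_natCast]

theorem relations : Relations N M L (x : Model N M L) y z where
  pow_x := by rw [x_pow, ZMod.natCast_self]; rfl
  pow_y := by rw [y_pow, ZMod.natCast_self]; rfl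
  pow_z := by rw [z_pow, ZMod.natCast_self]; rfl
  y_mul_x := by ext <;> simp [x, y, z]
  z_mul_x := by ext <;> simp [x, z]
  z_mul_y := by ext <;> simp [y, z]

theorem x_pow_mul_y_pow_mul_z_zpow [NeZero N] [NeZero M] [NeZero L] (p : Model N M L) :
    x ^ p.a.val * y ^ p.b.val * z ^ (p.c.val : ℤ) = p := by
  ext <;> simp [x_pow, y_pow, z_zpow]

variable [NeZero N] [NeZero M] [NeZero L] {H : Type*} [Group H] {g₁ g₂ g₃ : H}

def lift (h : Relations N M L g₁ g₂ g₃) : Model N M L →* H :=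
  MonoidHom.mk' (fun p => g₁ ^ p.a.val * g₂ ^ p.b.val * g₃ ^ (p.c.val : ℤ)) fun p q => by
    rw [normalForm_mul h.y_mul_x h.z_mul_x h.z_mul_y]
    congr 1
    · congr 1
      · exact pow_eq_pow_of_natCast_eq h.pow_x (by simp)
      · exact pow_eq_pow_of_natCast_eq h.pow_y (by simp)
    · refine zpow_eq_zpow_of_intCast_eq h.pow_z ?_
      push_cast [mul_c, sgn_eq_neg_one_pow_val, bit_eq_val_mod_two, ZMod.natCast_zmod_val]
      rfl

theorem lift_apply (h : Relations N M L g₁ g₂ g₃) (p : Model N M L) :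
    lift h p = g₁ ^ p.a.val * g₂ ^ p.b.val * g₃ ^ (p.c.val : ℤ) := rfl

theorem lift_x (h : Relations N M L g₁ g₂ g₃) : lift h x = g₁ := by
  simpa [lift_apply, x] using
    pow_eq_pow_of_natCast_eq h.pow_x (u := (1 : ZMod N).val) (v := 1) (by simp)

theorem lift_y (h : Relations N M L g₁ g₂ g₃) : lift h y = g₂ := by
  simpa [lift_apply, y] using
    pow_eq_pow_of_natCast_eq h.pow_y (u := (1 : ZMod M).val) (v := 1) (by simp)

theorem lift_z (h : Relations N M L g₁ g₂ g₃) : lift h z = g₃ := by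
  simpa [lift_apply, z] using
    zpow_eq_zpow_of_intCast_eq h.pow_z (u := ((1 : ZMod L).val : ℤ)) (v := 1) (by simp)

end Model

def modelEquiv (n m ℓ : ℕ) [Fact (2 ∣ 2 ^ n)] [Fact (2 ∣ 2 ^ m)] :
    Model (2 ^ n) (2 ^ m) (2 ^ ℓ) ≃* G1 n m ℓ :=
  MonoidHom.toMulEquiv (Model.lift (relations_of n m ℓ))
    (PresentedGroup.toGroup ((lift_relsG1_eq_one_iff n m ℓ ![Model.x, Model.y, Model.z]).2
      Model.relations))
    (MonoidHom.ext fun p => by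
      simpa [Model.lift_apply, PresentedGroup.toGroup.of] using
        Model.x_pow_mul_y_pow_mul_z_zpow p)
    (PresentedGroup.ext fun i => by
      fin_cases i <;> simp [PresentedGroup.toGroup.of, Model.lift_x, Model.lift_y, Model.lift_z])

theorem modelEquiv_x (n m ℓ : ℕ) [Fact (2 ∣ 2 ^ n)] [Fact (2 ∣ 2 ^ m)] :
    modelEquiv n m ℓ Model.x = PresentedGroup.of 0 :=
  Model.lift_x (relations_of n m ℓ)

theorem modelEquiv_y (n m ℓ : ℕ) [Fact (2 ∣ 2 ^ n)] [Fact (2 ∣ 2 ^ m)] :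
    modelEquiv n m ℓ Model.y = PresentedGroup.of 1 :=
  Model.lift_y (relations_of n m ℓ)

theorem modelEquiv_z (n m ℓ : ℕ) [Fact (2 ∣ 2 ^ n)] [Fact (2 ∣ 2 ^ m)] :
    modelEquiv n m ℓ Model.z = PresentedGroup.of 2 :=
  Model.lift_z (relations_of n m ℓ)

namespace Model

open Multiplicative Subgroup

variable {N M L : ℕ} [Fact (2 ∣ N)] [Fact (2 ∣ M)]

section CenterHom

variable {N' M' L' : ℕ} (hN : N = 2 * N') (hM : M = 2 * M') (hL : L = L' * 2)

def centerHom : Multiplicative (ZMod N') × Multiplicative (ZMod M') × Multiplicative (ZMod 2) →*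
    Model N M L where
  toFun u :=
    ⟨ZMod.scale 2 hN u.1.toAdd, ZMod.scale 2 hM u.2.1.toAdd, ZMod.scale L' hL u.2.2.toAdd⟩
  map_one' := by ext <;> simp
  map_mul' u v := by
    ext <;> simp [parity_scale_two hN, parity_scale_two hM, add_comm]

theorem centerHom_injective (hL' : L' ≠ 0) : Function.Injective (centerHom hN hM hL) := by
  refine (injective_iff_map_eq_one _).2 fun ⟨u₁, u₂, u₃⟩ hu => ?_
  have h₁ := ZMod.scale_injective two_ne_zero hN ((congrArg Model.a hu).trans (map_zero _).symm)
  have h₂ := ZMod.scale_injective two_ne_zero hM ((congrArg Model.b hu).trans (map_zero _).symm)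
  have h₃ := ZMod.scale_injective hL' hL ((congrArg Model.c hu).trans (map_zero _).symm)
  simp only [Prod.mk_eq_one]
  exact ⟨toAdd_eq_zero.1 h₁, toAdd_eq_zero.1 h₂, toAdd_eq_zero.1 h₃⟩

variable [Fact (2 ∣ L)]

theorem mem_center_iff (h2 : (2 : ZMod L) ≠ 0) {g : Model N M L} :
    g ∈ center (Model N M L) ↔ parity N g.a = 0 ∧ parity M g.b = 0 ∧ 2 * g.c = 0 := by
  rw [Subgroup.mem_center_iff]
  constructor
  · intro hg
    have hx : 2 * g.c = bit g.b := by
      have := congrArg Model.c (hg x)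
      simp only [mul_c, x, sgn_zero, sgn_one, bit_zero, bit_one] at this
      push_cast at this
      linear_combination this
    have hz : (sgn g.b * sgn g.a : ZMod L) = 1 := by
      have := congrArg Model.c (hg z)
      simp only [mul_c, z, sgn_zero, bit_zero] at this
      push_cast at this
      linear_combination this
    rcases parity_cases g.b with ⟨hb, hsb, hbb⟩ | ⟨-, -, hbb⟩
    · rw [hbb, Int.cast_zero] at hx
      rcases parity_cases g.a with ⟨ha, -⟩ | ⟨-, hsa, -⟩
      · exact ⟨ha, hb, hx⟩
      · rw [hsb, hsa] at hz
        exact absurd (by linear_combination -hz) h2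
    · rw [hbb, Int.cast_one] at hx
      have := congrArg (parity L) hx
      rw [map_mul, map_ofNat, map_one, show (2 : ZMod 2) = 0 from rfl, zero_mul] at this
      exact absurd this zero_ne_one
  · rintro ⟨ha, hb, hc⟩ h
    ext
    · exact add_comm _ _
    · exact add_comm _ _
    · simp only [mul_c, sgn_of_parity_eq_zero, bit_of_parity_eq_zero, ha, hb]
      rcases parity_cases h.a with ⟨-, hsa, -⟩ | ⟨-, hsa, -⟩ <;>
        rcases parity_cases h.b with ⟨-, hsb, -⟩ | ⟨-, hsb, -⟩ <;>
        simp only [hsa, hsb] <;> push_cast <;> first | linear_combination hc | ring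

theorem range_centerHom (h2 : (2 : ZMod L) ≠ 0) :
    (centerHom hN hM hL).range = center (Model N M L) := by
  ext g
  rw [MonoidHom.mem_range, mem_center_iff h2]
  constructor
  · rintro ⟨u, rfl⟩
    exact ⟨parity_scale_two hN _, parity_scale_two hM _,
      by exact_mod_cast ZMod.natCast_mul_scale hL _⟩
  · rintro ⟨ha, hb, hc⟩
    obtain ⟨u₁, hu₁⟩ := (ZMod.castHom_eq_zero_iff_exists_scale hN _).1 ha
    obtain ⟨u₂, hu₂⟩ := (ZMod.castHom_eq_zero_iff_exists_scale hM _).1 hb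
    obtain ⟨u₃, hu₃⟩ :=
      (ZMod.natCast_mul_eq_zero_iff_exists_scale hL two_ne_zero _).1 (by exact_mod_cast hc)
    exact ⟨(ofAdd u₁, ofAdd u₂, ofAdd u₃), Model.ext hu₁ hu₂ hu₃⟩

noncomputable def centerEquiv (hL' : L' ≠ 0) (h2 : (2 : ZMod L) ≠ 0) :
    center (Model N M L) ≃*
      Multiplicative (ZMod N') × Multiplicative (ZMod M') × Multiplicative (ZMod 2) :=
  ((MonoidHom.ofInjective (centerHom_injective hN hM hL hL')).trans
    (MulEquiv.subgroupCongr (range_centerHom hN hM hL h2))).symm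

include hN hM hL in
theorem center_eq_closure (h2 : (2 : ZMod L) ≠ 0) :
    center (Model N M L) = closure {x ^ 2, y ^ 2, z ^ L'} := by
  rw [← range_centerHom hN hM hL h2]
  apply le_antisymm
  · rintro _ ⟨⟨u₁, u₂, u₃⟩, rfl⟩
    obtain ⟨i, hi⟩ := ZMod.intCast_surjective (toAdd u₁)
    obtain ⟨j, hj⟩ := ZMod.intCast_surjective (toAdd u₂)
    obtain ⟨k, hk⟩ := ZMod.intCast_surjective (toAdd u₃)
    have : centerHom hN hM hL (u₁, u₂, u₃) = (x ^ 2) ^ i * (y ^ 2) ^ j * (z ^ L') ^ k := by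
      rw [← zpow_natCast x, ← zpow_natCast y, ← zpow_natCast z, ← zpow_mul, ← zpow_mul,
        ← zpow_mul, x_zpow, y_zpow, z_zpow]
      ext <;> simp [centerHom, ← hi, ← hj, ← hk]
    rw [this]
    exact mul_mem (mul_mem (zpow_mem (subset_closure (by simp)) _)
      (zpow_mem (subset_closure (by simp)) _)) (zpow_mem (subset_closure (by simp)) _)
  · rw [closure_le]
    rintro _ (rfl | rfl | rfl)
    · exact ⟨(ofAdd 1, 1, 1), by ext <;> simp [centerHom, x_pow]⟩
    · exact ⟨(1, ofAdd 1, 1), by ext <;> simp [centerHom, y_pow]⟩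
    · exact ⟨(1, 1, ofAdd 1), by ext <;> simp [centerHom, z_pow]⟩

end CenterHom

end Model

end G1

theorem stmt3 (n m ℓ : ℕ) (hm : 1 ≤ m) (hnm : m ≤ n) (hℓ : 2 ≤ ℓ) :
    Subgroup.center (G1 n m ℓ) =
      Subgroup.closure {(PresentedGroup.of 0 : G1 n m ℓ) ^ 2,
        (PresentedGroup.of 1 : G1 n m ℓ) ^ 2,
        (PresentedGroup.of 2 : G1 n m ℓ) ^ (2 ^ (ℓ - 1))} ∧
    Nonempty (Subgroup.center (G1 n m ℓ) ≃*
      (Multiplicative (ZMod (2 ^ (n - 1))) × Multiplicative (ZMod (2 ^ (m - 1))) ×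
        Multiplicative (ZMod 2))) := by
  have hN : 2 ^ n = 2 * 2 ^ (n - 1) := by rw [← pow_succ']; congr; omega
  have hM : 2 ^ m = 2 * 2 ^ (m - 1) := by rw [← pow_succ']; congr; omega
  have hL : 2 ^ ℓ = 2 ^ (ℓ - 1) * 2 := by rw [← pow_succ]; congr; omega
  have : Fact (2 ∣ 2 ^ n) := ⟨hN ▸ dvd_mul_right _ _⟩
  have : Fact (2 ∣ 2 ^ m) := ⟨hM ▸ dvd_mul_right _ _⟩
  have : Fact (2 ∣ 2 ^ ℓ) := ⟨hL ▸ dvd_mul_left _ _⟩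
  have h2 : ((2 : ℕ) : ZMod (2 ^ ℓ)) ≠ 0 := by
    rw [Ne, ZMod.natCast_eq_zero_iff]
    exact Nat.not_dvd_of_pos_of_lt two_pos
      (lt_of_lt_of_le (by norm_num) (Nat.pow_le_pow_right two_pos hℓ))
  rw [Nat.cast_ofNat] at h2
  let e := G1.modelEquiv n m ℓ
  refine ⟨?_, ⟨(Subgroup.centerCongr e.symm).trans
    (G1.Model.centerEquiv hN hM hL (by positivity) h2)⟩⟩
  rw [← Subgroup.map_equiv_center e, G1.Model.center_eq_closure hN hM hL h2,
    MonoidHom.map_closure]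
  simp [Set.image_insert_eq, e, G1.modelEquiv_x, G1.modelEquiv_y, G1.modelEquiv_z]
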